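/- arXiv:1708.07463 — 3 statements merged into one kernel-verified Lean document; each statement's English description precedes it below -/
import Mathlib

section
/- Let p ∈ (0,1) and ε ≥ 0. The penalty function P(x) = Σ_{i=1}^n (x_i+ε)^p − ((1+ε)^p + (n−1)ε^p) is nonnegative on the simplex {x ∈ [0,1]^n : Σ x_i = 1}, and P(x) = 0 if and only if x ∈ {0,1}^n. -/
open Finset

/-- Key pointwise bound: for `t ∈ [0,1]`, by concavity of `s ↦ s^p`,
`t*(1+ε)^p + (1-t)*ε^p ≤ (t+ε)^p`. -/
lemma key_le (p ε : ℝ) (hp0 : 0 < p) (hp1 : p < 1) (hε : 0 ≤ ε)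
    (t : ℝ) (ht : t ∈ Set.Icc (0:ℝ) 1) :
    t * (1 + ε) ^ p + (1 - t) * ε ^ p ≤ (t + ε) ^ p := by
  obtain ⟨ht0, ht1⟩ := ht
  have hcc := (Real.strictConcaveOn_rpow hp0 hp1).concaveOn
  have := hcc.2 (show (1+ε:ℝ) ∈ Set.Ici (0:ℝ) by simp; linarith)
    (show ε ∈ Set.Ici (0:ℝ) by simpa using hε) ht0
    (show (0:ℝ) ≤ 1 - t by linarith) (show t + (1 - t) = 1 by ring)
  have harg : t • (1 + ε) + (1 - t) • ε = t + ε := by simp; ring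
  rw [harg] at this
  simpa [smul_eq_mul] using this

lemma key_lt (p ε : ℝ) (hp0 : 0 < p) (hp1 : p < 1) (hε : 0 ≤ ε)
    (t : ℝ) (h0 : 0 < t) (h1 : t < 1) :
    t * (1 + ε) ^ p + (1 - t) * ε ^ p < (t + ε) ^ p := by
  have hne : (1 + ε : ℝ) ≠ ε := by linarith
  have := (Real.strictConcaveOn_rpow hp0 hp1).2
    (show (1+ε:ℝ) ∈ Set.Ici (0:ℝ) by simp; linarith)
    (show ε ∈ Set.Ici (0:ℝ) by simpa using hε) hne h0
    (show (0:ℝ) < 1 - t by linarith) (show t + (1 - t) = 1 by ring)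
  have harg : t • (1 + ε) + (1 - t) • ε = t + ε := by simp; ring
  rw [harg] at this
  simpa [smul_eq_mul] using this

/-- For `p ∈ (0,1)` and `ε ≥ 0`, the penalty
`P(x) = ∑ (x i + ε)^p - ((1+ε)^p + (n-1) ε^p)` is nonnegative on the simplex
`{x ∈ [0,1]^n : ∑ x i = 1}`, and `P(x) = 0` iff `x ∈ {0,1}^n`. -/
theorem stmt2 (n : ℕ) (p ε : ℝ) (hp0 : 0 < p) (hp1 : p < 1) (hε : 0 ≤ ε)
    (x : Fin n → ℝ) (hx : ∀ i, x i ∈ Set.Icc (0:ℝ) 1) (hsum : ∑ i, x i = 1) :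
    0 ≤ (∑ i, (x i + ε) ^ p) - ((1 + ε) ^ p + ((n : ℝ) - 1) * ε ^ p) ∧
    ((∑ i, (x i + ε) ^ p) - ((1 + ε) ^ p + ((n : ℝ) - 1) * ε ^ p) = 0 ↔
      ∀ i, x i = 0 ∨ x i = 1) := by
  have hlow : ∑ i, (x i * (1 + ε) ^ p + (1 - x i) * ε ^ p)
      = (1 + ε) ^ p + ((n : ℝ) - 1) * ε ^ p := by
    have : ∀ i : Fin n, x i * (1 + ε) ^ p + (1 - x i) * ε ^ p
        = x i * ((1 + ε) ^ p - ε ^ p) + ε ^ p := by intro i; ring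
    rw [Finset.sum_congr rfl fun i _ => this i, Finset.sum_add_distrib,
      ← Finset.sum_mul, hsum, Finset.sum_const, Finset.card_univ,
      Fintype.card_fin, nsmul_eq_mul]
    ring
  have hle : ∀ i ∈ Finset.univ (α := Fin n),
      x i * (1 + ε) ^ p + (1 - x i) * ε ^ p ≤ (x i + ε) ^ p :=
    fun i _ => key_le p ε hp0 hp1 hε (x i) (hx i)
  have hsumle : (1 + ε) ^ p + ((n : ℝ) - 1) * ε ^ p ≤ ∑ i, (x i + ε) ^ p := by
    rw [← hlow]; exact Finset.sum_le_sum hle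
  refine ⟨by linarith, ?_, ?_⟩
  · intro heq
    by_contra hcon
    push_neg at hcon
    obtain ⟨i, hi0, hi1⟩ := hcon
    have h0 : 0 < x i := lt_of_le_of_ne (hx i).1 (Ne.symm hi0)
    have h1 : x i < 1 := lt_of_le_of_ne (hx i).2 hi1
    have hlt : ∑ j, (x j * (1 + ε) ^ p + (1 - x j) * ε ^ p) < ∑ j, (x j + ε) ^ p :=
      Finset.sum_lt_sum hle ⟨i, Finset.mem_univ i, key_lt p ε hp0 hp1 hε (x i) h0 h1⟩
    rw [hlow] at hlt
    linarith
  · intro hall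
    have : ∑ i, (x i + ε) ^ p = ∑ i, (x i * (1 + ε) ^ p + (1 - x i) * ε ^ p) := by
      apply Finset.sum_congr rfl
      intro i _
      rcases hall i with h | h <;> simp [h]
    rw [this, hlow]
    ring
end

section
/- Conversely, given a 3-dimensional matching M of R with |M| = K, assigning flow k to the triple (x^k, y^k, z^k) ∈ M yields a feasible instantiation: each function node provides exactly one function for exactly one flow, so all node capacity constraints μ_i ≥ λ are satisfied, and since the links (x^k,y^k) and (y^k,z^k) exist (as (x^k,y^k,z^k) ∈ R) and link capacities are at least 4Kλ, a feasible routing exists. -/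
/-!
Send every segment of flow `k` over the single link joining its two consecutive stages
(source, `xᵏ`, `yᵏ`, `zᵏ`, destination). These links exist because `e k ∈ M ⊆ R`, and each link
carries at most all `4K` segments, of rate `lam` each. Because `M` is a matching, distinct pairs
(flow, stage) are placed on distinct function nodes, so each node serves a single `lam`.
-/

open Finset

structure NSInstance where
  Node : Type
  [fintypeNode : Fintype Node]
  [decEqNode : DecidableEq Node]
  Fn : Type
  L : Finset (Node × Node)
  C : Node × Node → ℝ
  mu : Node → ℝ
  K : ℕ
  Vf : Fn → Finset Node
  S : Fin K → Node
  D : Fin K → Node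
  lam : Fin K → ℝ
  chain : Fin K → List Fn

attribute [instance] NSInstance.fintypeNode NSInstance.decEqNode

namespace NSInstance

def FeasibleWith (I : NSInstance) (y : Fin I.K → ℕ → I.Node)
    (r : Fin I.K → ℕ → I.Node × I.Node → ℝ) : Prop :=
  (∀ k, ∀ s : Fin (I.chain k).length, y k s.val ∈ I.Vf ((I.chain k).get s)) ∧
  (∀ k, ∀ s s' : Fin (I.chain k).length, y k s.val = y k s'.val → s = s') ∧
  (∀ k s l, 0 ≤ r k s l) ∧
  (∀ k s l, l ∉ I.L → r k s l = 0) ∧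
  (∀ k, ∀ s ≤ (I.chain k).length, ∀ i : I.Node,
    (∑ j : I.Node, r k s (i, j)) - (∑ j : I.Node, r k s (j, i)) =
      (if i = (if s = 0 then I.S k else y k (s - 1)) then I.lam k else 0) -
      (if i = (if s = (I.chain k).length then I.D k else y k s) then I.lam k else 0)) ∧
  (∀ l ∈ I.L, (∑ k : Fin I.K, ∑ s ∈ Finset.range ((I.chain k).length + 1), r k s l)
      ≤ I.C l) ∧
  (∀ i : I.Node, (∑ k : Fin I.K, ∑ s ∈ Finset.range (I.chain k).length,
      (if y k s = i then I.lam k else 0)) ≤ I.mu i)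

def Feasible (I : NSInstance) : Prop := ∃ y r, I.FeasibleWith y r

end NSInstance

/-- The network constructed in the NP-hardness proof from a 3DM instance
`R ⊆ X × Y × Z` (with `X = Y = Z = Fin K`): nodes are five groups
`S ∪ X ∪ Y ∪ Z ∪ D` (group `g` is `({g} × Fin K)`), functions are
`F₁ ∪ F₂ ∪ F₃` (flow `k` has chain `(f₁ᵏ, f₂ᵏ, f₃ᵏ)`, pairwise distinct across
flows), `V_f = X, Y, Z` for `f ∈ F₁, F₂, F₃` respectively, links are all `(s,x)`,
all `(z,d)`, and `(x,y), (y,z)` for each `(x,y,z) ∈ R`, all flows have rate `lam`,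
link capacities `4 K lam`, and function-node capacities `lam ∈ [lam, 2 lam)`. -/
def construct (K : ℕ) (lam : ℝ) (R : Finset (Fin K × Fin K × Fin K)) : NSInstance where
  Node := Fin 5 × Fin K
  Fn := Fin 3 × Fin K
  L :=
    ((Finset.univ : Finset (Fin K × Fin K)).image
        fun sx => (((0 : Fin 5), sx.1), ((1 : Fin 5), sx.2))) ∪
    (R.image fun t => (((1 : Fin 5), t.1), ((2 : Fin 5), t.2.1))) ∪
    (R.image fun t => (((2 : Fin 5), t.2.1), ((3 : Fin 5), t.2.2))) ∪
    ((Finset.univ : Finset (Fin K × Fin K)).image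
        fun zd => (((3 : Fin 5), zd.1), ((4 : Fin 5), zd.2)))
  C := fun _ => 4 * K * lam
  mu := fun _ => lam
  K := K
  Vf := fun f => (Finset.univ : Finset (Fin K)).image
      fun i => ((⟨f.1.val + 1, by omega⟩ : Fin 5), i)
  S := fun k => ((0 : Fin 5), k)
  D := fun k => ((4 : Fin 5), k)
  lam := fun _ => lam
  chain := fun k => [((0 : Fin 3), k), ((1 : Fin 3), k), ((2 : Fin 3), k)]

theorem Finset.sum_ite_eq_le_of_injOn {α β M : Type*} [DecidableEq β]
    [AddCommMonoid M] [PartialOrder M] [IsOrderedAddMonoid M]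
    {s : Finset α} {f : α → β} (hf : Set.InjOn f s) (i : β) {c : M} (hc : 0 ≤ c) :
    (∑ x ∈ s, if f x = i then c else 0) ≤ c :=
  calc (∑ x ∈ s, if f x = i then c else 0)
      = ∑ y ∈ s.image f, if y = i then c else 0 :=
        (Finset.sum_image (f := fun y => if y = i then c else 0) hf).symm
    _ = if i ∈ s.image f then c else 0 := Finset.sum_ite_eq' _ _ _
    _ ≤ c := by split_ifs <;> simp [hc]

theorem Fintype.sum_ite_pair_eq_left {γ M : Type*} [Fintype γ] [DecidableEq γ]
    [AddCommMonoid M] (i a b : γ) (c : M) :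
    (∑ j : γ, if (i, j) = (a, b) then c else 0) = if i = a then c else 0 := by
  by_cases h : i = a <;> simp [h]

theorem Fintype.sum_ite_pair_eq_right {γ M : Type*} [Fintype γ] [DecidableEq γ]
    [AddCommMonoid M] (i a b : γ) (c : M) :
    (∑ j : γ, if (j, i) = (a, b) then c else 0) = if i = b then c else 0 := by
  by_cases h : i = b <;> simp [h]

namespace NSInstance

variable (I : NSInstance) (y : Fin I.K → ℕ → I.Node)

def segSrc (k : Fin I.K) (s : ℕ) : I.Node := if s = 0 then I.S k else y k (s - 1)

def segDst (k : Fin I.K) (s : ℕ) : I.Node :=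
  if s = (I.chain k).length then I.D k else y k s

def directRouting (k : Fin I.K) (s : ℕ) (l : I.Node × I.Node) : ℝ :=
  if s ≤ (I.chain k).length ∧ l = (I.segSrc y k s, I.segDst y k s) then I.lam k else 0

theorem directRouting_conservation (k : Fin I.K) {s : ℕ} (hs : s ≤ (I.chain k).length)
    (i : I.Node) :
    (∑ j, I.directRouting y k s (i, j)) - (∑ j, I.directRouting y k s (j, i)) =
      (if i = I.segSrc y k s then I.lam k else 0) -
      (if i = I.segDst y k s then I.lam k else 0) := by
  simp only [directRouting, hs, true_and, Fintype.sum_ite_pair_eq_left,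
    Fintype.sum_ite_pair_eq_right]

theorem sum_directRouting_le (hlam : ∀ k, 0 ≤ I.lam k) (l : I.Node × I.Node) :
    (∑ k, ∑ s ∈ range ((I.chain k).length + 1), I.directRouting y k s l) ≤
      ∑ k, ((I.chain k).length + 1 : ℝ) * I.lam k := by
  refine Finset.sum_le_sum fun k _ => ?_
  calc (∑ s ∈ range ((I.chain k).length + 1), I.directRouting y k s l)
      ≤ ∑ _s ∈ range ((I.chain k).length + 1), I.lam k :=
        Finset.sum_le_sum fun s _ => by unfold directRouting; split_ifs <;> simp [hlam k]
    _ = ((I.chain k).length + 1 : ℝ) * I.lam k := by simp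

theorem feasibleWith_directRouting
    (hplace : ∀ k, ∀ s : Fin (I.chain k).length, y k s.val ∈ I.Vf ((I.chain k).get s))
    (hdistinct : ∀ k, ∀ s s' : Fin (I.chain k).length, y k s.val = y k s'.val → s = s')
    (hlam : ∀ k, 0 ≤ I.lam k)
    (hlinks : ∀ k, ∀ s ≤ (I.chain k).length, (I.segSrc y k s, I.segDst y k s) ∈ I.L)
    (hcap : ∀ l ∈ I.L, ∑ k, ((I.chain k).length + 1 : ℝ) * I.lam k ≤ I.C l)
    (hnode : ∀ i : I.Node, (∑ k : Fin I.K, ∑ s ∈ range (I.chain k).length,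
      (if y k s = i then I.lam k else 0)) ≤ I.mu i) :
    I.FeasibleWith y (I.directRouting y) := by
  refine ⟨hplace, hdistinct, fun k s l => ?_, fun k s l hl => ?_,
    fun k s hs i => I.directRouting_conservation y k hs i,
    fun l hl => (I.sum_directRouting_le y hlam l).trans (hcap l hl), hnode⟩
  · unfold directRouting; split_ifs <;> simp [hlam k]
  · unfold directRouting
    rw [if_neg]
    rintro ⟨hs, rfl⟩
    exact hl (hlinks k s hs)

end NSInstance

section Construction

variable {K : ℕ} (e : Fin K → Fin K × Fin K × Fin K)

def tripletPlacement (k : Fin K) (s : ℕ) : Fin 5 × Fin K :=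
  if s = 0 then ((1 : Fin 5), (e k).1)
  else if s = 1 then ((2 : Fin 5), (e k).2.1)
  else ((3 : Fin 5), (e k).2.2)

theorem tripletPlacement_fst_val (k : Fin K) (s : ℕ) :
    ((tripletPlacement e k s).1 : ℕ) = min s 2 + 1 := by
  unfold tripletPlacement
  split_ifs <;> simp <;> omega

theorem tripletPlacement_stage_eq {k k' : Fin K} {s s' : ℕ} (hs : s < 3) (hs' : s' < 3)
    (h : tripletPlacement e k s = tripletPlacement e k' s') : s = s' := by
  have := congrArg (fun p => (p.1 : ℕ)) h
  simp only [tripletPlacement_fst_val] at this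
  omega

theorem tripletPlacement_injOn
    (hdisj : Pairwise fun k k' =>
      (e k).1 ≠ (e k').1 ∧ (e k).2.1 ≠ (e k').2.1 ∧ (e k).2.2 ≠ (e k').2.2) :
    Set.InjOn (fun p : Fin K × ℕ => tripletPlacement e p.1 p.2)
      ((univ ×ˢ range 3 : Finset (Fin K × ℕ)) : Set (Fin K × ℕ)) := by
  rintro ⟨k, s⟩ hs ⟨k', s'⟩ hs' h
  simp only [coe_product, coe_univ, coe_range, Set.mem_prod, Set.mem_univ, Set.mem_Iio,
    true_and] at hs hs'
  obtain rfl := tripletPlacement_stage_eq e hs hs' h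
  obtain rfl | hk := eq_or_ne k k'
  · rfl
  obtain ⟨h1, h2, h3⟩ := hdisj hk
  interval_cases s <;> simp_all [tripletPlacement]

theorem sum_tripletPlacement_load_le
    (hdisj : Pairwise fun k k' =>
      (e k).1 ≠ (e k').1 ∧ (e k).2.1 ≠ (e k').2.1 ∧ (e k).2.2 ≠ (e k').2.2)
    {lam : ℝ} (hlam : 0 ≤ lam) (i : Fin 5 × Fin K) :
    (∑ k, ∑ s ∈ range 3, if tripletPlacement e k s = i then lam else 0) ≤ lam := by
  rw [← Finset.sum_product']
  exact Finset.sum_ite_eq_le_of_injOn (tripletPlacement_injOn e hdisj) i hlam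

variable (lam : ℝ) (R : Finset (Fin K × Fin K × Fin K))

theorem tripletPlacement_mem_Vf (k : Fin K) (s : Fin ((construct K lam R).chain k).length) :
    tripletPlacement e k s.val ∈ (construct K lam R).Vf (((construct K lam R).chain k).get s) := by
  fin_cases s <;> exact mem_image_of_mem _ (mem_univ _)

theorem tripletPlacement_segment_mem_L (he : ∀ k, e k ∈ R) (k : Fin K) (s : ℕ)
    (hs : s ≤ ((construct K lam R).chain k).length) :
    ((construct K lam R).segSrc (tripletPlacement e) k s,
      (construct K lam R).segDst (tripletPlacement e) k s) ∈ (construct K lam R).L := by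
  have hs3 : s ≤ 3 := hs
  interval_cases s
  · exact mem_union_left _ (mem_union_left _ (mem_union_left _
      (mem_image_of_mem _ (mem_univ (k, (e k).1)))))
  · exact mem_union_left _ (mem_union_left _ (mem_union_right _ (mem_image_of_mem _ (he k))))
  · exact mem_union_left _ (mem_union_right _ (mem_image_of_mem _ (he k)))
  · exact mem_union_right _ (mem_image_of_mem _ (mem_univ ((e k).2.2, k)))

theorem sum_construct_segment_rates (l : (construct K lam R).Node × (construct K lam R).Node) :
    ∑ k, (((construct K lam R).chain k).length + 1 : ℝ) * (construct K lam R).lam k =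
      (construct K lam R).C l := by
  show ∑ _k : Fin K, (((3 : ℕ) : ℝ) + 1) * lam = 4 * K * lam
  rw [sum_const, card_univ, Fintype.card_fin, nsmul_eq_mul]
  push_cast
  ring

end Construction

theorem stmt13_general (K : ℕ) (lam : ℝ) (hlam : 0 < lam)
    (R M : Finset (Fin K × Fin K × Fin K)) (hMR : M ⊆ R)
    (hmatch : ∀ t ∈ M, ∀ t' ∈ M, t ≠ t' →
      t.1 ≠ t'.1 ∧ t.2.1 ≠ t'.2.1 ∧ t.2.2 ≠ t'.2.2)
    (e : Fin K → Fin K × Fin K × Fin K) (he : ∀ k, e k ∈ M)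
    (hinj : Function.Injective e) :
    ∃ r, (construct K lam R).FeasibleWith
      (fun k s =>
        if s = 0 then (((1 : Fin 5), (e k).1) : Fin 5 × Fin K)
        else if s = 1 then ((2 : Fin 5), (e k).2.1)
        else ((3 : Fin 5), (e k).2.2)) r := by
  have hdisj : Pairwise fun k k' =>
      (e k).1 ≠ (e k').1 ∧ (e k).2.1 ≠ (e k').2.1 ∧ (e k).2.2 ≠ (e k').2.2 :=
    fun k k' hk => hmatch _ (he k) _ (he k') (hinj.ne hk)
  exact ⟨_, (construct K lam R).feasibleWith_directRouting (tripletPlacement e)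
    (tripletPlacement_mem_Vf e lam R)
    (fun k s s' h => Fin.ext (tripletPlacement_stage_eq e s.isLt s'.isLt h))
    (fun _ => hlam.le)
    (tripletPlacement_segment_mem_L e lam R fun k => hMR (he k))
    (fun l _ => (sum_construct_segment_rates lam R l).le)
    (sum_tripletPlacement_load_le e hdisj hlam.le)⟩

/-- Conversely, given a 3-dimensional matching `M ⊆ R` with `|M| = K`
(enumerated by an injection `e : Fin K → M`), assigning flow `k` to the triple
`e k = (xᵏ, yᵏ, zᵏ)` yields a feasible instantiation of the constructed network:
there is a routing `r` such that this instantiation together with `r` satisfies all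
constraints (each function node provides exactly one function for exactly one flow,
so node capacities `μ = lam ≥ lam` are respected, and since links `(xᵏ,yᵏ)` and
`(yᵏ,zᵏ)` exist and link capacities are `4 K lam`, a feasible routing exists). -/
theorem stmt13 (K : ℕ) (lam : ℝ) (hlam : 0 < lam)
    (R M : Finset (Fin K × Fin K × Fin K)) (hMR : M ⊆ R) (hMcard : M.card = K)
    (hmatch : ∀ t ∈ M, ∀ t' ∈ M, t ≠ t' →
      t.1 ≠ t'.1 ∧ t.2.1 ≠ t'.2.1 ∧ t.2.2 ≠ t'.2.2)
    (e : Fin K → Fin K × Fin K × Fin K) (he : ∀ k, e k ∈ M)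
    (hinj : Function.Injective e) :
    ∃ r, (construct K lam R).FeasibleWith
      (fun k s =>
        if s = 0 then (((1 : Fin 5), (e k).1) : Fin 5 × Fin K)
        else if s = 1 then ((2 : Fin 5), (e k).2.1)
        else ((3 : Fin 5), (e k).2.2)) r :=
  stmt13_general K lam hlam R M hMR hmatch e he hinj
end

section
/- There exists an instance of the network slicing problem for which, if either some node capacity μ_i < Σ_k λ(k) or some link capacity C_{ij} < Σ_k λ(k)(|F(k)|+1) (all other capacities being large), the LP relaxation has no optimal solution with binary assignment variables x_{i,f}(k); hence the lower bounds in Theorem 2 are tight. -/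
open Finset

namespace NSInstance

/-- Feasibility for the LP relaxation of the network slicing problem: `x i k s` is
the (relaxed, in `[0,1]`) variable indicating that node `i` provides the `s`-th
function of the chain of flow `k`, and `r k s (i,j)` is the rate on link `(i,j)` of
the virtual flow of flow `k` that has received its first `s` functions. Constraints:
`x ∈ [0,1]`, supported on `Vf`, each function fully assigned (`∑_{i ∈ V_f} x = 1`),
at most one function of a flow per node (`∑_s x ≤ 1`), rates nonnegative and
supported on links, flow conservation for every virtual flow at every node (the
net outflow of virtual flow `s` at node `i` equals `λ(k)` times the fraction
entering at `i`, i.e. `x i k (s-1)` — or the source indicator for `s = 0` — minus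
`λ(k)` times the fraction leaving at `i`), link capacity and node capacity. -/
def LPFeasible (I : NSInstance) (x : I.Node → Fin I.K → ℕ → ℝ)
    (r : Fin I.K → ℕ → I.Node × I.Node → ℝ) : Prop :=
  (∀ i k s, 0 ≤ x i k s ∧ x i k s ≤ 1) ∧
  (∀ k, ∀ s : Fin (I.chain k).length, ∀ i,
    i ∉ I.Vf ((I.chain k).get s) → x i k s.val = 0) ∧
  (∀ k, ∀ s : Fin (I.chain k).length, ∑ i ∈ I.Vf ((I.chain k).get s), x i k s.val = 1) ∧
  (∀ k i, ∑ s ∈ Finset.range (I.chain k).length, x i k s ≤ 1) ∧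
  (∀ k s l, 0 ≤ r k s l) ∧
  (∀ k s l, l ∉ I.L → r k s l = 0) ∧
  (∀ k, ∀ s ≤ (I.chain k).length, ∀ i : I.Node,
    (∑ j : I.Node, r k s (i, j)) - (∑ j : I.Node, r k s (j, i)) =
      I.lam k * (if s = 0 then (if i = I.S k then 1 else 0) else x i k (s - 1)) -
      I.lam k * (if s = (I.chain k).length then (if i = I.D k then 1 else 0)
                 else x i k s)) ∧
  (∀ l ∈ I.L, (∑ k : Fin I.K, ∑ s ∈ Finset.range ((I.chain k).length + 1), r k s l)
      ≤ I.C l) ∧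
  (∀ i : I.Node, (∑ k : Fin I.K, ∑ s ∈ Finset.range (I.chain k).length,
      I.lam k * x i k s) ≤ I.mu i)

/-- The total link rate objective `∑_{(i,j) ∈ L} ∑_k r_{ij}(k)`. -/
def LPObj (I : NSInstance) (r : Fin I.K → ℕ → I.Node × I.Node → ℝ) : ℝ :=
  ∑ l ∈ I.L, ∑ k : Fin I.K, ∑ s ∈ Finset.range ((I.chain k).length + 1), r k s l

end NSInstance


/-- Witness instance: 2 nodes, one flow `0 → 1` with a single function placeable at
either node, node capacities `1/2`, demand `1`. -/
noncomputable abbrev W : NSInstance where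
  Node := Fin 2
  Fn := Unit
  L := {((0 : Fin 2), (1 : Fin 2))}
  C := fun _ => 10
  mu := fun _ => 1/2
  K := 1
  Vf := fun _ => Finset.univ
  S := fun _ => 0
  D := fun _ => 1
  lam := fun _ => 1
  chain := fun _ => [()]

lemma W_forced (x : W.Node → Fin W.K → ℕ → ℝ) (r : Fin W.K → ℕ → W.Node × W.Node → ℝ)
    (h : W.LPFeasible x r) : x 0 0 0 = 1/2 := by
  obtain ⟨h1, h2, h3, h4, h5, h6, h7, h8, h9⟩ := h
  have hx0 : x 0 0 0 ≤ 1/2 := by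
    have := h9 0
    simpa [W, Fin.sum_univ_one] using this
  have hx1 : x 1 0 0 ≤ 1/2 := by
    have := h9 1
    simpa [W, Fin.sum_univ_one] using this
  have hsum : x 0 0 0 + x 1 0 0 = 1 := by
    have := h3 0 ⟨0, by simp [W]⟩
    simpa [W, Fin.sum_univ_two] using this
  linarith

lemma W_obj (x : W.Node → Fin W.K → ℕ → ℝ) (r : Fin W.K → ℕ → W.Node × W.Node → ℝ)
    (h : W.LPFeasible x r) : W.LPObj r = 1 := by
  obtain ⟨h1, h2, h3, h4, h5, h6, h7, h8, h9⟩ := h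
  have z00 : r 0 0 ((0:Fin 2), (0:Fin 2)) = 0 := h6 0 0 _ (by decide)
  have z10 : r 0 0 ((1:Fin 2), (0:Fin 2)) = 0 := h6 0 0 _ (by decide)
  have z00' : r 0 1 ((0:Fin 2), (0:Fin 2)) = 0 := h6 0 1 _ (by decide)
  have z10' : r 0 1 ((1:Fin 2), (0:Fin 2)) = 0 := h6 0 1 _ (by decide)
  have e0 : r 0 0 ((0:Fin 2), (1:Fin 2)) = 1 - x 0 0 0 := by
    have := h7 0 0 (by norm_num [W]) 0
    simp only [W, Fin.sum_univ_two] at this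
    rw [z00, z10] at this
    norm_num at this
    linarith
  have e1 : r 0 1 ((0:Fin 2), (1:Fin 2)) = x 0 0 0 := by
    have := h7 0 1 (by norm_num [W]) 0
    simp only [W, Fin.sum_univ_two] at this
    rw [z00', z10'] at this
    norm_num at this
    linarith
  have : W.LPObj r = r 0 0 ((0:Fin 2), (1:Fin 2)) + r 0 1 ((0:Fin 2), (1:Fin 2)) := by
    simp [NSInstance.LPObj, W, Fin.sum_univ_one, Finset.sum_range_succ]
  rw [this, e0, e1]; ring

/-- Theorem 2, tightness: there exists an instance of the network
slicing problem (with nonnegative demands) in which some node capacity is below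
`∑_k λ(k)` or some link capacity is below `∑_k λ(k)(|F(k)|+1)`, whose LP relaxation
has an optimal solution, but no optimal solution of the LP relaxation has all
assignment variables `x_{i,f}(k)` binary. Hence the lower bounds of Theorem 2 are
tight. -/
theorem stmt15 :
    ∃ I : NSInstance, (∀ k, 0 ≤ I.lam k) ∧
      ((∃ i : I.Node, I.mu i < ∑ k, I.lam k) ∨
        (∃ l ∈ I.L, I.C l < ∑ k, I.lam k * (((I.chain k).length : ℝ) + 1))) ∧
      (∃ x r, I.LPFeasible x r ∧ ∀ x' r', I.LPFeasible x' r' → I.LPObj r ≤ I.LPObj r') ∧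
      (∀ x r, I.LPFeasible x r →
        (∀ x' r', I.LPFeasible x' r' → I.LPObj r ≤ I.LPObj r') →
        ¬ (∀ (i : I.Node) (k : Fin I.K), ∀ s < (I.chain k).length,
            x i k s = 0 ∨ x i k s = 1)) := by
  refine ⟨W, fun k => by norm_num [W], Or.inl ⟨0, by norm_num [W, Fin.sum_univ_one]⟩, ?_, ?_⟩
  · refine ⟨fun _ _ _ => 1/2,
      fun _ _ l => if l = ((0:Fin 2),(1:Fin 2)) then (1/2 : ℝ) else 0, ?_, ?_⟩
    · refine ⟨fun i k s => by norm_num, fun k s i hi => absurd (by simp [W]) hi,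
        fun k s => by simp [W, Fin.sum_univ_two],
        fun k i => by simp [W]; norm_num,
        fun k s l => by dsimp only; split <;> norm_num,
        fun k s l hl => by
          simp only [W, Finset.mem_singleton] at hl
          simp [hl],
        ?_,
        fun l hl => by
          simp only [W, Finset.mem_singleton] at hl
          subst hl
          norm_num [Fin.sum_univ_one, Finset.sum_range_succ, W],
        fun i => by simp [W, Fin.sum_univ_one]⟩
      intro k s hs i
      fin_cases k
      have hs1 : s ≤ 1 := hs
      interval_cases s <;> fin_cases i <;>
        norm_num [W, Fin.sum_univ_two]
    · intro x' r' h'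
      rw [W_obj x' r' h']
      rw [show W.LPObj (fun _ _ l => if l = ((0:Fin 2),(1:Fin 2)) then (1/2:ℝ) else 0) = 1 by
        norm_num [NSInstance.LPObj, W, Fin.sum_univ_one, Finset.sum_range_succ]]
  · intro x r hfeas _ hbin
    have := W_forced x r hfeas
    have h01 := hbin 0 0 0 (by norm_num [W])
    rw [this] at h01
    rcases h01 with h | h <;> norm_num at h
end
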